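/- Suppose f : ℝ^n → ℝ is differentiable with L-Lipschitz gradient, f attains its minimum value f* at some x*, and f satisfies the Regularity Condition RC(α, β) at x* with f(x*) = f*. Then f satisfies the Polyak-Łojasiewicz inequality with constant μ = 1/(β² L), i.e., (1/2)‖∇f(z)‖² ≥ (1/(β² L))(f(z) − f*) for all z ∈ ℝ^n. -/

import Mathlib

/-!
The gradient vanishes at the minimiser `x⋆`, so the descent lemma for an `L`-Lipschitz gradient
gives `f z - f⋆ ≤ (L/2) ‖z - x⋆‖²`. Dropping the `‖∇f z‖²` term of RC and applying Cauchy–Schwarz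
gives `‖z - x⋆‖ ≤ β ‖∇f z‖`; substituting the second bound into the first is the PL inequality.
-/

open scoped RealInnerProductSpace Gradient

section LipschitzGradient

variable {E : Type*} [NormedAddCommGroup E] [InnerProductSpace ℝ E] [CompleteSpace E]
  {f : E → ℝ}

theorem gradient_eq_zero_of_isLocalMin {a : E} (h : IsLocalMin f a) : ∇ f a = 0 := by
  simp [gradient, h.fderiv_eq_zero]

theorem hasDerivAt_comp_add_smul (hf : Differentiable ℝ f) (x v : E) (t : ℝ) :
    HasDerivAt (fun s : ℝ => f (x + s • v)) ⟪∇ f (x + t • v), v⟫ t := by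
  have hline : HasDerivAt (fun s : ℝ => x + s • v) v t := by
    simpa using ((hasDerivAt_id t).smul_const v).const_add x
  rw [inner_gradient_left]
  exact (hf (x + t • v)).hasFDerivAt.comp_hasDerivAt t hline

theorem inner_gradient_sub_le {L : ℝ} (hLip : ∀ u v, ‖∇ f u - ∇ f v‖ ≤ L * ‖u - v‖)
    (x v : E) {t : ℝ} (ht : 0 ≤ t) :
    ⟪∇ f (x + t • v) - ∇ f x, v⟫ ≤ L * t * ‖v‖ ^ 2 :=
  calc ⟪∇ f (x + t • v) - ∇ f x, v⟫
      ≤ ‖∇ f (x + t • v) - ∇ f x‖ * ‖v‖ := real_inner_le_norm _ _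
    _ ≤ L * ‖(x + t • v) - x‖ * ‖v‖ := by gcongr; exact hLip _ _
    _ = L * t * ‖v‖ ^ 2 := by
      rw [add_sub_cancel_left, norm_smul, Real.norm_of_nonneg ht]; ring

/-- The descent lemma. -/
theorem le_add_inner_gradient_add_half_mul_sq (hf : Differentiable ℝ f) {L : ℝ}
    (hLip : ∀ u v, ‖∇ f u - ∇ f v‖ ≤ L * ‖u - v‖) (x y : E) :
    f y ≤ f x + ⟪∇ f x, y - x⟫ + L / 2 * ‖y - x‖ ^ 2 := by
  set v := y - x
  -- `φ` is the gap between `f` on the segment and the quadratic upper model; it is antitone.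
  set φ : ℝ → ℝ := fun t => f (x + t • v) - t * ⟪∇ f x, v⟫ - L / 2 * t ^ 2 * ‖v‖ ^ 2
  have hφ' (t : ℝ) : HasDerivAt φ
      (⟪∇ f (x + t • v) - ∇ f x, v⟫ - L * t * ‖v‖ ^ 2) t := by
    have hquad := ((hasDerivAt_pow 2 t).const_mul (L / 2)).mul_const (‖v‖ ^ 2)
    refine (((hasDerivAt_comp_add_smul hf x v t).sub
      ((hasDerivAt_id t).mul_const ⟪∇ f x, v⟫)).sub hquad).congr_deriv ?_
    simp only [inner_sub_left, one_mul]; ring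
  have hanti : AntitoneOn φ (Set.Ici 0) :=
    antitoneOn_of_hasDerivWithinAt_nonpos (convex_Ici 0)
      (HasDerivAt.continuousOn fun t _ => hφ' t)
      (fun t _ => (hφ' t).hasDerivWithinAt)
      (fun t ht => by
        rw [interior_Ici] at ht
        linarith [inner_gradient_sub_le hLip x v ht.le])
  have h10 : φ 1 ≤ φ 0 := hanti Set.self_mem_Ici (Set.mem_Ici.2 zero_le_one) zero_le_one
  simp only [φ, v, one_smul, add_sub_cancel, zero_smul, add_zero] at h10
  linarith

end LipschitzGradient

theorem mul_norm_le_norm_of_mul_sq_le_inner {E : Type*} [NormedAddCommGroup E]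
    [InnerProductSpace ℝ E] {g v : E} {b : ℝ} (h : b * ‖v‖ ^ 2 ≤ ⟪g, v⟫) :
    b * ‖v‖ ≤ ‖g‖ := by
  rcases (norm_nonneg v).eq_or_lt with hv | hv
  · simp [← hv]
  · refine le_of_mul_le_mul_right ?_ hv
    calc b * ‖v‖ * ‖v‖ = b * ‖v‖ ^ 2 := by ring
      _ ≤ ⟪g, v⟫ := h
      _ ≤ ‖g‖ * ‖v‖ := real_inner_le_norm g v

/-- RC(α,β) plus L-Lipschitz gradient implies the PL inequality
with constant 1/(β²L). -/
theorem rc_implies_pl {n : ℕ} (f : EuclideanSpace ℝ (Fin n) → ℝ)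
    (hf : Differentiable ℝ f)
    (L : ℝ) (hL : 0 < L)
    (hLip : ∀ u v, ‖gradient f u - gradient f v‖ ≤ L * ‖u - v‖)
    (xstar : EuclideanSpace ℝ (Fin n)) (fstar : ℝ)
    (hmin : f xstar = fstar) (hlb : ∀ z, fstar ≤ f z)
    (α β : ℝ) (hα : 0 < α) (hβ : 0 < β)
    (hRC : ∀ z, ⟪gradient f z, z - xstar⟫ ≥
      (1 / α) * ‖gradient f z‖ ^ 2 + (1 / β) * ‖z - xstar‖ ^ 2) :
    ∀ z, (1 / 2) * ‖gradient f z‖ ^ 2 ≥ (1 / (β ^ 2 * L)) * (f z - fstar) := by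
  intro z
  have hcrit : ∇ f xstar = 0 :=
    gradient_eq_zero_of_isLocalMin (Filter.Eventually.of_forall fun y => hmin ▸ hlb y)
  have hgap : f z - fstar ≤ L / 2 * ‖z - xstar‖ ^ 2 := by
    have := le_add_inner_gradient_add_half_mul_sq hf hLip xstar z
    rw [hcrit, inner_zero_left, hmin] at this
    linarith
  have hdist : ‖z - xstar‖ ≤ β * ‖∇ f z‖ := by
    have hRC' : 1 / β * ‖z - xstar‖ ^ 2 ≤ ⟪∇ f z, z - xstar⟫ := by
      have : 0 ≤ 1 / α * ‖∇ f z‖ ^ 2 := by positivity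
      linarith [hRC z]
    have := mul_norm_le_norm_of_mul_sq_le_inner hRC'
    rwa [one_div, inv_mul_le_iff₀ hβ] at this
  calc 1 / (β ^ 2 * L) * (f z - fstar)
      ≤ 1 / (β ^ 2 * L) * (L / 2 * (β * ‖∇ f z‖) ^ 2) := by gcongr; exact hgap.trans (by gcongr)
    _ = 1 / 2 * ‖∇ f z‖ ^ 2 := by field_simp
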